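/- arXiv:1004.1211 — 2 statements merged into one kernel-verified Lean document; each statement's English description precedes it below -/
import Mathlib

section
/- The open-type rewriting system on DCC^d types, given by orienting the equations (s^ℓ)^{ℓ'} → s^{ℓ⊔ℓ'}, unit^ℓ → unit, (s → t)^ℓ → s → t^ℓ, (s × t)^ℓ → (s^ℓ × t^ℓ), T̄_{ℓ'}(s)^ℓ → T̄_{ℓ'}(s^ℓ), and T̄_{ℓ'}(s)^ℓ → T̄_{ℓ'}(s) when ℓ ⊑ ℓ', is terminating: every sequence of rewrites from any type reaches a normal form in which qualifiers occur only on sum types. -/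
/-- DCC^d types. -/
inductive WTy (L : Type) where
  | unit : WTy L
  | fn : WTy L → WTy L → WTy L
  | prod : WTy L → WTy L → WTy L
  | sum : WTy L → WTy L → WTy L
  | wmon : L → WTy L → WTy L
  | open_ : L → WTy L → WTy L

/-- One-step rewriting by the oriented open-type equations,
applicable at any subterm position. -/
inductive Rw {L : Type} [SemilatticeSup L] [OrderBot L] : WTy L → WTy L → Prop where
  -- root rules
  | open_open (ℓ ℓ' : L) (s : WTy L) :
      Rw (.open_ ℓ' (.open_ ℓ s)) (.open_ (ℓ ⊔ ℓ') s)
  | open_unit (ℓ : L) : Rw (.open_ ℓ .unit) .unit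
  | open_fn (ℓ : L) (s t : WTy L) :
      Rw (.open_ ℓ (.fn s t)) (.fn s (.open_ ℓ t))
  | open_prod (ℓ : L) (s t : WTy L) :
      Rw (.open_ ℓ (.prod s t)) (.prod (.open_ ℓ s) (.open_ ℓ t))
  | open_wmon_push (ℓ ℓ' : L) (s : WTy L) :
      Rw (.open_ ℓ (.wmon ℓ' s)) (.wmon ℓ' (.open_ ℓ s))
  | open_wmon_drop (ℓ ℓ' : L) (s : WTy L) (h : ℓ ≤ ℓ') :
      Rw (.open_ ℓ (.wmon ℓ' s)) (.wmon ℓ' s)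
  -- congruence rules
  | fn_l {s s' : WTy L} (t : WTy L) : Rw s s' → Rw (.fn s t) (.fn s' t)
  | fn_r (s : WTy L) {t t' : WTy L} : Rw t t' → Rw (.fn s t) (.fn s t')
  | prod_l {s s' : WTy L} (t : WTy L) : Rw s s' → Rw (.prod s t) (.prod s' t)
  | prod_r (s : WTy L) {t t' : WTy L} : Rw t t' → Rw (.prod s t) (.prod s t')
  | sum_l {s s' : WTy L} (t : WTy L) : Rw s s' → Rw (.sum s t) (.sum s' t)
  | sum_r (s : WTy L) {t t' : WTy L} : Rw t t' → Rw (.sum s t) (.sum s t')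
  | wmon (ℓ : L) {s s' : WTy L} : Rw s s' → Rw (.wmon ℓ s) (.wmon ℓ s')
  | open_ (ℓ : L) {s s' : WTy L} : Rw s s' → Rw (.open_ ℓ s) (.open_ ℓ s')

/-- A type is in normal form when all its subterms of the form `u^ℓ` with
`ℓ ≠ ⊥` have `u` a sum type. -/
def QualOnlyOnSums {L : Type} [SemilatticeSup L] [OrderBot L] : WTy L → Prop
  | .unit => True
  | .fn s t => QualOnlyOnSums s ∧ QualOnlyOnSums t
  | .prod s t => QualOnlyOnSums s ∧ QualOnlyOnSums t
  | .sum s t => QualOnlyOnSums s ∧ QualOnlyOnSums t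
  | .wmon _ s => QualOnlyOnSums s
  | .open_ ℓ s => (ℓ ≠ ⊥ → ∃ a b : WTy L, s = .sum a b) ∧ QualOnlyOnSums s

/-!
Give every type a weight in which each constructor adds one and a qualifier doubles the weight
of its body. Weights are positive, so every root rule strictly lowers the weight (the collapse
`(s^ℓ)^ℓ'` ↦ `s^(ℓ⊔ℓ')` turns `4w` into `2w`, the push rules turn `2(w+1)` into at most `2w+1`),
and the weight is strictly monotone in each argument, so the congruence rules lower it too.
In an irreducible type every qualifier sits on a sum, since a qualifier on any other type is a
redex.
-/

namespace WTy

variable {L : Type}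

def weight : WTy L → ℕ
  | .unit => 1
  | .fn s t => weight s + weight t + 1
  | .prod s t => weight s + weight t + 1
  | .sum s t => weight s + weight t + 1
  | .wmon _ s => weight s + 1
  | .open_ _ s => 2 * weight s

theorem weight_pos (t : WTy L) : 0 < weight t := by
  induction t <;> simp only [weight] <;> omega

end WTy

namespace Rw

variable {L : Type} [SemilatticeSup L] [OrderBot L]

theorem weight_lt {s t : WTy L} (h : Rw s t) : t.weight < s.weight := by
  induction h with
  | open_open ℓ ℓ' s => have := s.weight_pos; simp only [WTy.weight]; omega
  | _ => simp only [WTy.weight] at *; omega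

theorem wellFounded_inv : WellFounded (fun a b : WTy L => Rw b a) :=
  Subrelation.wf weight_lt (InvImage.wf WTy.weight wellFounded_lt)

theorem exists_open_of_not_sum (ℓ : L) {s : WTy L} (hs : ∀ a b, s ≠ .sum a b) :
    ∃ u, Rw (.open_ ℓ s) u := by
  cases s with
  | unit => exact ⟨_, open_unit ℓ⟩
  | fn a b => exact ⟨_, open_fn ℓ a b⟩
  | prod a b => exact ⟨_, open_prod ℓ a b⟩
  | sum a b => exact absurd rfl (hs a b)
  | wmon ℓ' a => exact ⟨_, open_wmon_push ℓ ℓ' a⟩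
  | open_ ℓ' a => exact ⟨_, open_open ℓ' ℓ a⟩

theorem qualOnlyOnSums_of_irreducible {t : WTy L} (ht : ∀ u, ¬ Rw t u) : QualOnlyOnSums t := by
  induction t with
  | unit => trivial
  | fn s t ihs iht =>
    exact ⟨ihs fun u hu => ht _ (fn_l t hu), iht fun u hu => ht _ (fn_r s hu)⟩
  | prod s t ihs iht =>
    exact ⟨ihs fun u hu => ht _ (prod_l t hu), iht fun u hu => ht _ (prod_r s hu)⟩
  | sum s t ihs iht =>
    exact ⟨ihs fun u hu => ht _ (sum_l t hu), iht fun u hu => ht _ (sum_r s hu)⟩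
  | wmon ℓ s ihs => exact ihs fun u hu => ht _ (wmon ℓ hu)
  | open_ ℓ s ihs =>
    refine ⟨fun _ => ?_, ihs fun u hu => ht _ (open_ ℓ hu)⟩
    by_contra! hs
    obtain ⟨u, hu⟩ := exists_open_of_not_sum ℓ hs
    exact ht u hu

end Rw

/-- the open-type rewriting system is terminating (every
descending rewrite chain is well-founded), and every normal form has
qualifiers only on sum types. -/
theorem open_rewriting_terminates {L : Type} [SemilatticeSup L] [OrderBot L] :
    (∀ t : WTy L, Acc (fun a b : WTy L => Rw b a) t) ∧
    (∀ t : WTy L, (∀ u : WTy L, ¬ Rw t u) → QualOnlyOnSums t) :=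
  ⟨Rw.wellFounded_inv.apply, fun _ => Rw.qualOnlyOnSums_of_irreducible⟩
end

section
/- The functions λx. bind y = x in inj_i () (for i ∈ {1,2}) are typable in DCC^{cd} with type T_ℓ(s) → (unit + unit) for every level ℓ and type s, but are not typable in DCC at that type for ℓ ≠ ⊥. -/
/-- DCC^{cd} types: strong monads `T_ℓ` and open types `s^ℓ`. -/
inductive Ty (L : Type) where
  | unit : Ty L
  | fn : Ty L → Ty L → Ty L
  | prod : Ty L → Ty L → Ty L
  | sum : Ty L → Ty L → Ty L
  | mon : L → Ty L → Ty L
  | open_ : L → Ty L → Ty L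

/-- Strong protection `ℓ ≼ t` (sum types never protected). -/
inductive ProtS {L : Type} [Lattice L] [BoundedOrder L] : L → Ty L → Prop where
  | unit (ℓ : L) : ProtS ℓ .unit
  | fn {ℓ : L} {s t : Ty L} : ProtS ℓ t → ProtS ℓ (.fn s t)
  | prod {ℓ : L} {s t : Ty L} : ProtS ℓ s → ProtS ℓ t → ProtS ℓ (.prod s t)
  | mon_le {ℓ ℓ' : L} {s : Ty L} : ℓ ≤ ℓ' → ProtS ℓ (.mon ℓ' s)
  | mon_inner {ℓ ℓ' : L} {s : Ty L} : ProtS ℓ s → ProtS ℓ (.mon ℓ' s)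

/-- Weak protection `ℓ ≤ t` (sum clause included; monadic types weakly
protected as in DCC^d; no rule for nontrivial open types). -/
inductive WProt {L : Type} [Lattice L] [BoundedOrder L] : L → Ty L → Prop where
  | unit (ℓ : L) : WProt ℓ .unit
  | fn {ℓ : L} {s t : Ty L} : WProt ℓ t → WProt ℓ (.fn s t)
  | prod {ℓ : L} {s t : Ty L} : WProt ℓ s → WProt ℓ t → WProt ℓ (.prod s t)
  | sum {ℓ : L} {s t : Ty L} : WProt ℓ s → WProt ℓ t → WProt ℓ (.sum s t)
  | mon_le {ℓ ℓ' : L} {s : Ty L} : ℓ ≤ ℓ' → WProt ℓ (.mon ℓ' s)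
  | mon_inner {ℓ ℓ' : L} {s : Ty L} : WProt ℓ s → WProt ℓ (.mon ℓ' s)

/-- Congruence closure of the open-type equations (through strong monads). -/
inductive TyEq {L : Type} [Lattice L] [BoundedOrder L] : Ty L → Ty L → Prop where
  | refl (s : Ty L) : TyEq s s
  | symm {s t : Ty L} : TyEq s t → TyEq t s
  | trans {s t u : Ty L} : TyEq s t → TyEq t u → TyEq s u
  | fn_congr {s s' t t' : Ty L} : TyEq s s' → TyEq t t' → TyEq (.fn s t) (.fn s' t')
  | prod_congr {s s' t t' : Ty L} : TyEq s s' → TyEq t t' → TyEq (.prod s t) (.prod s' t')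
  | sum_congr {s s' t t' : Ty L} : TyEq s s' → TyEq t t' → TyEq (.sum s t) (.sum s' t')
  | mon_congr (ℓ : L) {s s' : Ty L} : TyEq s s' → TyEq (.mon ℓ s) (.mon ℓ s')
  | open_congr (ℓ : L) {s s' : Ty L} : TyEq s s' → TyEq (.open_ ℓ s) (.open_ ℓ s')
  | open_open (ℓ ℓ' : L) (s : Ty L) :
      TyEq (.open_ ℓ' (.open_ ℓ s)) (.open_ (ℓ ⊔ ℓ') s)
  | open_bot (s : Ty L) : TyEq (.open_ (⊥ : L) s) s
  | open_unit (ℓ : L) : TyEq (.open_ ℓ .unit) .unit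
  | open_fn (ℓ : L) (s t : Ty L) : TyEq (.open_ ℓ (.fn s t)) (.fn s (.open_ ℓ t))
  | open_prod (ℓ : L) (s t : Ty L) :
      TyEq (.open_ ℓ (.prod s t)) (.prod (.open_ ℓ s) (.open_ ℓ t))
  | open_mon_push (ℓ ℓ' : L) (s : Ty L) :
      TyEq (.open_ ℓ (.mon ℓ' s)) (.mon ℓ' (.open_ ℓ s))
  | open_mon_drop (ℓ ℓ' : L) (s : Ty L) (h : ℓ ≤ ℓ') :
      TyEq (.open_ ℓ (.mon ℓ' s)) (.mon ℓ' s)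

/-- Terms (de Bruijn; `case` and `bind` bind variable 0). -/
inductive Tm (L : Type) where
  | unit : Tm L
  | var : Nat → Tm L
  | lam : Tm L → Tm L
  | app : Tm L → Tm L → Tm L
  | pair : Tm L → Tm L → Tm L
  | proj : Bool → Tm L → Tm L
  | inj : Bool → Tm L → Tm L
  | case : Tm L → Tm L → Tm L → Tm L
  | etaS : L → Tm L → Tm L
  | bind : Tm L → Tm L → Tm L

/-- DCC typing `Γ; Π ⊢ e : s`. -/
inductive HTS {L : Type} [Lattice L] [BoundedOrder L] :
    List (Ty L) → L → Tm L → Ty L → Prop where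
  | var {Γ : List (Ty L)} {P : L} {n : Nat} {s : Ty L} :
      Γ[n]? = some s → HTS Γ P (.var n) s
  | unit {Γ : List (Ty L)} {P : L} : HTS Γ P .unit .unit
  | lam {Γ : List (Ty L)} {P : L} {e : Tm L} {s t : Ty L} :
      HTS (s :: Γ) P e t → HTS Γ P (.lam e) (.fn s t)
  | app {Γ : List (Ty L)} {P : L} {e e' : Tm L} {s t : Ty L} :
      HTS Γ P e (.fn s t) → HTS Γ P e' s → HTS Γ P (.app e e') t
  | pair {Γ : List (Ty L)} {P : L} {e₁ e₂ : Tm L} {s₁ s₂ : Ty L} :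
      HTS Γ P e₁ s₁ → HTS Γ P e₂ s₂ → HTS Γ P (.pair e₁ e₂) (.prod s₁ s₂)
  | proj₁ {Γ : List (Ty L)} {P : L} {e : Tm L} {s₁ s₂ : Ty L} :
      HTS Γ P e (.prod s₁ s₂) → HTS Γ P (.proj false e) s₁
  | proj₂ {Γ : List (Ty L)} {P : L} {e : Tm L} {s₁ s₂ : Ty L} :
      HTS Γ P e (.prod s₁ s₂) → HTS Γ P (.proj true e) s₂
  | inj₁ {Γ : List (Ty L)} {P : L} {e : Tm L} {s₁ s₂ : Ty L} :
      HTS Γ P e s₁ → HTS Γ P (.inj false e) (.sum s₁ s₂)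
  | inj₂ {Γ : List (Ty L)} {P : L} {e : Tm L} {s₁ s₂ : Ty L} :
      HTS Γ P e s₂ → HTS Γ P (.inj true e) (.sum s₁ s₂)
  | case {Γ : List (Ty L)} {P : L} {e e₁ e₂ : Tm L} {s₁ s₂ t : Ty L} :
      HTS Γ P e (.sum s₁ s₂) → HTS (s₁ :: Γ) P e₁ t → HTS (s₂ :: Γ) P e₂ t →
      HTS Γ P (.case e e₁ e₂) t
  | ret {Γ : List (Ty L)} {P ℓ : L} {e : Tm L} {s : Ty L} :
      HTS Γ (P ⊔ ℓ) e s → HTS Γ P (.etaS ℓ e) (.mon ℓ s)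
  | bind {Γ : List (Ty L)} {P ℓ : L} {e e' : Tm L} {s t : Ty L} :
      HTS Γ P e (.mon ℓ s) → HTS (s :: Γ) P e' t → ProtS ℓ (.mon P t) →
      HTS Γ P (.bind e e') t

/-- DCC^{cd} typing `Γ; Π; Σ ⊢ e : t`, with protection context `Π` and open
context `Σ`. -/
inductive HTCD {L : Type} [Lattice L] [BoundedOrder L] :
    List (Ty L) → L → L → Tm L → Ty L → Prop where
  | var {Γ : List (Ty L)} {P S : L} {n : Nat} {s : Ty L} :
      Γ[n]? = some s → HTCD Γ P S (.var n) s
  | unit {Γ : List (Ty L)} {P S : L} : HTCD Γ P S .unit .unit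
  | lam {Γ : List (Ty L)} {P S : L} {e : Tm L} {s t : Ty L} :
      HTCD (s :: Γ) P S e t → HTCD Γ P S (.lam e) (.fn s t)
  | app {Γ : List (Ty L)} {P S : L} {e e' : Tm L} {s t : Ty L} :
      HTCD Γ P S e (.fn s t) → HTCD Γ P S e' s → HTCD Γ P S (.app e e') t
  | pair {Γ : List (Ty L)} {P S : L} {e₁ e₂ : Tm L} {s₁ s₂ : Ty L} :
      HTCD Γ P S e₁ s₁ → HTCD Γ P S e₂ s₂ → HTCD Γ P S (.pair e₁ e₂) (.prod s₁ s₂)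
  | proj₁ {Γ : List (Ty L)} {P S : L} {e : Tm L} {s₁ s₂ : Ty L} :
      HTCD Γ P S e (.prod s₁ s₂) → HTCD Γ P S (.proj false e) s₁
  | proj₂ {Γ : List (Ty L)} {P S : L} {e : Tm L} {s₁ s₂ : Ty L} :
      HTCD Γ P S e (.prod s₁ s₂) → HTCD Γ P S (.proj true e) s₂
  | inj₁ {Γ : List (Ty L)} {P S : L} {e : Tm L} {s₁ s₂ : Ty L} :
      HTCD Γ P S e s₁ → HTCD Γ P S (.inj false e) (.sum s₁ s₂)
  | inj₂ {Γ : List (Ty L)} {P S : L} {e : Tm L} {s₁ s₂ : Ty L} :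
      HTCD Γ P S e s₂ → HTCD Γ P S (.inj true e) (.sum s₁ s₂)
  | case {Γ : List (Ty L)} {P S ℓ : L} {e e₁ e₂ : Tm L} {s₁ s₂ t : Ty L} :
      HTCD Γ P S e (.open_ ℓ (.sum s₁ s₂)) →
      (ℓ ≠ ⊥ → ¬ S ≤ ℓ) →
      HTCD (.open_ ℓ s₁ :: Γ) P S e₁ t → HTCD (.open_ ℓ s₂ :: Γ) P S e₂ t →
      HTCD Γ P S (.case e e₁ e₂) t
  | ret {Γ : List (Ty L)} {P S ℓ : L} {e : Tm L} {s : Ty L} :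
      HTCD Γ (P ⊔ ℓ) S e s → HTCD Γ P S (.etaS ℓ e) (.mon ℓ s)
  | bind_old {Γ : List (Ty L)} {P S ℓ : L} {e e' : Tm L} {s t : Ty L} :
      HTCD Γ P S e (.mon ℓ s) → HTCD (s :: Γ) P S e' t →
      ProtS ℓ (.mon P t) → HTCD Γ P S (.bind e e') t
  | bind_new {Γ : List (Ty L)} {P S ℓ : L} {e e' : Tm L} {s t : Ty L} :
      HTCD Γ P S e (.mon ℓ s) → HTCD (.open_ ℓ s :: Γ) P (S ⊓ ℓ) e' t →
      WProt ℓ (.mon P t) → HTCD Γ P S (.bind e e') t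
  | conv {Γ : List (Ty L)} {P S : L} {e : Tm L} {s t : Ty L} :
      HTCD Γ P S e s → TyEq s t → HTCD Γ P S e t

/-- The functions `λx. bind y = x in inj_i ()`. -/
def constInj {L : Type} (i : Bool) : Tm L := .lam (.bind (.var 0) (.inj i .unit))

/-! In DCC the `bind` forces `ℓ ≼ T_⊥(unit + unit)`, i.e. `ℓ ≤ ⊥`, because sum types are never
strongly protected. The new bind rule of DCC^{cd} asks only for weak protection, which
`unit + unit` has at every level, and it needs no case analysis on the bound variable. -/

section
variable {L : Type} [Lattice L] [BoundedOrder L]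

theorem ProtS.not_sum {ℓ : L} {s t : Ty L} : ¬ ProtS ℓ (.sum s t) := nofun

theorem ProtS.mon_iff {ℓ ℓ' : L} {t : Ty L} : ProtS ℓ (.mon ℓ' t) ↔ ℓ ≤ ℓ' ∨ ProtS ℓ t := by
  constructor
  · intro h
    cases h with
    | mon_le hle => exact .inl hle
    | mon_inner hinner => exact .inr hinner
  · rintro (hle | hinner)
    exacts [.mon_le hle, .mon_inner hinner]

theorem HTCD.inj_unit {Γ : List (Ty L)} {P S : L} (i : Bool) :
    HTCD Γ P S (.inj i .unit) (.sum .unit .unit) := by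
  cases i
  exacts [.inj₁ .unit, .inj₂ .unit]

theorem HTCD.constInj (Γ : List (Ty L)) (P S ℓ : L) (s : Ty L) (i : Bool) :
    HTCD Γ P S (constInj i) (.fn (.mon ℓ s) (.sum .unit .unit)) :=
  .lam (.bind_new (.var rfl) (.inj_unit i) (.mon_inner (.sum (.unit ℓ) (.unit ℓ))))

theorem HTS.protS_of_lam_bind_var_zero {Γ : List (Ty L)} {P ℓ : L} {e : Tm L} {s t : Ty L}
    (h : HTS Γ P (.lam (.bind (.var 0) e)) (.fn (.mon ℓ s) t)) : ProtS ℓ (.mon P t) := by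
  cases h with
  | lam h =>
    cases h with
    | bind hvar _ hprot =>
      cases hvar with
      | var hget =>
        obtain ⟨rfl, rfl⟩ := Ty.mon.inj (Option.some.inj hget)
        exact hprot

theorem HTS.not_constInj {Γ : List (Ty L)} {ℓ : L} (hℓ : ℓ ≠ ⊥) (s : Ty L) (i : Bool) :
    ¬ HTS Γ ⊥ (constInj i) (.fn (.mon ℓ s) (.sum .unit .unit)) := fun h => by
  rcases ProtS.mon_iff.mp h.protS_of_lam_bind_var_zero with hle | hsum
  exacts [hℓ (le_bot_iff.mp hle), ProtS.not_sum hsum]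

end

/-- `λx. bind y = x in inj_i ()` is typable in DCC^{cd} at
`T_ℓ(s) → (unit + unit)` for every `ℓ` and `s`, but not typable in DCC at
that type when `ℓ ≠ ⊥`. -/
theorem constInj_typable_cd_not_dcc {L : Type} [Lattice L] [BoundedOrder L]
    (ℓ : L) (s : Ty L) (i : Bool) :
    HTCD ([] : List (Ty L)) (⊥ : L) (⊤ : L) (constInj i)
      (.fn (.mon ℓ s) (.sum .unit .unit)) ∧
    (ℓ ≠ ⊥ →
      ¬ HTS ([] : List (Ty L)) (⊥ : L) (constInj i)
          (.fn (.mon ℓ s) (.sum .unit .unit))) :=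
  ⟨.constInj [] ⊥ ⊤ ℓ s i, fun hℓ => HTS.not_constInj hℓ s i⟩
end
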